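/- If every vertex i satisfies n_i ≠ 0 for every solution of the adjunction system with negative definite intersection form, then the system has only finitely many solutions (n, e) ∈ (ℕ₊)^V × (ℕ₊)^V. -/

import Mathlib

open Finset

/-!
Solutions are compared coordinatewise. If `(n, e) ≤ (n', e')` are two solutions, then
`x = n' - n ≥ 0` satisfies `Q_{e'}(x) = ∑ⱼ xⱼ nⱼ (e'ⱼ - eⱼ) ≥ 0`, so negative definiteness
forces `x = 0`, and then `eⱼ nⱼ = e'ⱼ nⱼ` with `nⱼ > 0` gives `e = e'`. Hence the solutions form
an antichain in `ℕ^V × ℕ^V`, which is finite by Dickson's lemma.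
-/

section AdjunctionSystem

variable {V : Type*} [Fintype V] [DecidableEq V]

/-- The intersection form `Q_{(Γ,e)}`, with `w` the edge multiplicities. -/
def intersectionForm (w : V → V → ℝ) (e x : V → ℝ) : ℝ :=
  ∑ j, x j * (-e j * x j + ∑ k ∈ univ.erase j, w j k * x k)

def IsAdjunctionSolution (w : V → V → ℝ) (q n e : V → ℝ) : Prop :=
  ∀ j, e j * n j = q j + ∑ k ∈ univ.erase j, w j k * n k

variable {w : V → V → ℝ} {q n e n' e' : V → ℝ}

theorem intersectionForm_sub_of_isAdjunctionSolution (hs : IsAdjunctionSolution w q n e)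
    (hs' : IsAdjunctionSolution w q n' e') :
    intersectionForm w e' (n' - n) = ∑ j, (n' j - n j) * (n j * (e' j - e j)) := by
  refine sum_congr rfl fun j _ => congrArg _ ?_
  have hsum : ∑ k ∈ univ.erase j, w j k * (n' - n) k
      = ∑ k ∈ univ.erase j, w j k * n' k - ∑ k ∈ univ.erase j, w j k * n k := by
    simp only [Pi.sub_apply, mul_sub, sum_sub_distrib]
  rw [hsum, Pi.sub_apply]
  linear_combination hs j - hs' j

theorem IsAdjunctionSolution.eq_left_of_le (hs : IsAdjunctionSolution w q n e)
    (hs' : IsAdjunctionSolution w q n' e') (hneg : ∀ x ≠ 0, intersectionForm w e' x < 0)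
    (hn₀ : 0 ≤ n) (hn : n ≤ n') (he : e ≤ e') : n = n' := by
  by_contra hne
  have hpos : 0 ≤ intersectionForm w e' (n' - n) := by
    rw [intersectionForm_sub_of_isAdjunctionSolution hs hs']
    exact sum_nonneg fun j _ =>
      mul_nonneg (sub_nonneg.2 (hn j)) (mul_nonneg (hn₀ j) (sub_nonneg.2 (he j)))
  exact (hneg _ (sub_ne_zero.2 (Ne.symm hne))).not_ge hpos

theorem IsAdjunctionSolution.eq_right (hs : IsAdjunctionSolution w q n e)
    (hs' : IsAdjunctionSolution w q n e') (hn : ∀ j, n j ≠ 0) : e = e' :=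
  funext fun j => mul_right_cancel₀ (hn j) ((hs j).trans (hs' j).symm)

theorem isAdjunctionSolution_natCast {w : V → V → ℕ} {q : V → ℤ} {n e : V → ℕ}
    (h : ∀ j, (e j : ℤ) * n j = q j + ∑ k ∈ univ.erase j, (w j k : ℤ) * n k) :
    IsAdjunctionSolution (fun j k => (w j k : ℝ)) (fun j => (q j : ℝ)) (fun j => (n j : ℝ))
      (fun j => (e j : ℝ)) :=
  fun j => by simpa using congrArg (Int.cast : ℤ → ℝ) (h j)

def adjunctionSolutions (w : V → V → ℕ) (q : V → ℤ) : Set ((V → ℕ) × (V → ℕ)) :=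
  {s | (∀ j, 1 ≤ s.1 j) ∧ (∀ j, 1 ≤ s.2 j) ∧
    (∀ j, (s.2 j : ℤ) * s.1 j = q j + ∑ k ∈ univ.erase j, (w j k : ℤ) * s.1 k) ∧
    ∀ x ≠ 0, intersectionForm (fun j k => (w j k : ℝ)) (fun j => (s.2 j : ℝ)) x < 0}

theorem isAntichain_adjunctionSolutions (w : V → V → ℕ) (q : V → ℤ) :
    IsAntichain (· ≤ ·) (adjunctionSolutions w q) := by
  rintro ⟨n, e⟩ ⟨hn, -, hs, -⟩ ⟨n', e'⟩ ⟨-, -, hs', hneg'⟩ hne ⟨hnn', hee'⟩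
  have hsR := isAdjunctionSolution_natCast hs
  have hn_eq : n = n' := by
    have hcast := hsR.eq_left_of_le (isAdjunctionSolution_natCast hs') hneg'
      (fun j => Nat.cast_nonneg _) (fun j => Nat.cast_le.2 (hnn' j))
      (fun j => Nat.cast_le.2 (hee' j))
    exact funext fun j => Nat.cast_injective (congrFun hcast j)
  subst hn_eq
  have he_eq := hsR.eq_right (isAdjunctionSolution_natCast hs')
    fun j => Nat.cast_ne_zero.2 (Nat.one_le_iff_ne_zero.1 (hn j))
  exact hne (Prod.ext rfl (funext fun j => Nat.cast_injective (congrFun he_eq j)))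

end AdjunctionSystem

theorem stmt_2_general {V : Type*} [Fintype V] [DecidableEq V]
    (w : V → V → ℕ)
    (q : V → ℤ) :
    {s : (V → ℕ) × (V → ℕ) | (∀ j, 1 ≤ s.1 j) ∧ (∀ j, 1 ≤ s.2 j) ∧
      (∀ j, (s.2 j : ℤ) * s.1 j = q j + ∑ k ∈ univ.erase j, (w j k : ℤ) * s.1 k) ∧
      (∀ x : V → ℝ, x ≠ 0 →
        ∑ j, x j * (-(s.2 j : ℝ) * x j + ∑ k ∈ univ.erase j, (w j k : ℝ) * x k) < 0)}.Finite :=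
  WellQuasiOrderedLE.finite_of_isAntichain (isAntichain_adjunctionSolutions w q)

/-- If every vertex satisfies `n i ≠ 0` for every solution of the adjunction system
with negative definite intersection form, then there are only finitely many solutions
`(n, e) ∈ (ℕ₊)^V × (ℕ₊)^V`. -/
theorem stmt_2 {V : Type*} [Fintype V] [DecidableEq V]
    (w : V → V → ℕ) (hsymm : ∀ i j, w i j = w j i) (hdiag : ∀ i, w i i = 0)
    (hconn : (SimpleGraph.fromRel (fun i j => 0 < w i j)).Connected)
    (q : V → ℤ)
    (h : ∀ n e : V → ℕ, (∀ j, 1 ≤ e j) →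
      (∀ j, (e j : ℤ) * n j = q j + ∑ k ∈ univ.erase j, (w j k : ℤ) * n k) →
      (∀ x : V → ℝ, x ≠ 0 →
        ∑ j, x j * (-(e j : ℝ) * x j + ∑ k ∈ univ.erase j, (w j k : ℝ) * x k) < 0) →
      ∀ i, n i ≠ 0) :
    {s : (V → ℕ) × (V → ℕ) | (∀ j, 1 ≤ s.1 j) ∧ (∀ j, 1 ≤ s.2 j) ∧
      (∀ j, (s.2 j : ℤ) * s.1 j = q j + ∑ k ∈ univ.erase j, (w j k : ℤ) * s.1 k) ∧
      (∀ x : V → ℝ, x ≠ 0 →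
        ∑ j, x j * (-(s.2 j : ℝ) * x j + ∑ k ∈ univ.erase j, (w j k : ℝ) * x k) < 0)}.Finite :=
  stmt_2_general w q
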